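/- arXiv:1112.0293 — 5 statements merged into one kernel-verified Lean document; each statement's English description precedes it below -/
import Mathlib

section
/- Let H be a real Hilbert space and let p : H → [0, +∞] be convex, lower semicontinuous, positively 1-homogeneous, with p(0) = 0, and let N_p := {ζ ∈ H : ⟨ζ, x⟩ ≤ p(x) for all x ∈ H}. Fix A ∈ H. Then the functional ξ ↦ (1/2)‖ξ‖² + p(A − ξ) has a unique minimizer over H, and this minimizer equals the metric projection ξ₀ of A onto the nonempty closed convex set N_p (i.e., ξ₀ ∈ N_p and ‖A − ξ₀‖ = dist(A, N_p)). Moreover the minimum value equals (1/2)‖A‖² − (1/2)‖A − ξ₀‖². -/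
/-!
Write `N` for the polar set of `p`. For `ζ ∈ N` one has `⟪ζ, A - ξ⟫ ≤ p (A - ξ)`, so completing
the square gives
`E ξ ≥ ½‖A‖² - ½‖A - ζ‖² + ½‖ξ - ζ‖²`.
The key fact is that for `ζ = ξ₀` this lower bound is attained at `ξ = ξ₀`, i.e.
`p (A - ξ₀) = ⟪ξ₀, A - ξ₀⟫`. Since `p` is lower semicontinuous and sublinear, its epigraph is a
closed convex cone, and separating points from it (Hahn–Banach) shows that `p` is the support
function of `N`: `p v = sup_{ζ ∈ N} ⟪ζ, v⟫`. For `v = A - ξ₀` the variational inequality of the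
projection says that this supremum is attained at `ξ₀`.
-/

open scoped InnerProductSpace

section Sublinear

variable {E : Type*} [AddCommGroup E] [Module ℝ E]

theorem map_add_le_add_of_convex_of_homogeneous {p : E → EReal}
    (hconvex : ∀ x y : E, ∀ a b : ℝ, 0 ≤ a → 0 ≤ b → a + b = 1 →
      p (a • x + b • y) ≤ (a : EReal) * p x + (b : EReal) * p y)
    (hphom : ∀ t : ℝ, 0 < t → ∀ x, p (t • x) = (t : EReal) * p x) (x y : E) :
    p (x + y) ≤ p x + p y := by
  have hmid : x + y = (2 : ℝ) • ((1 / 2 : ℝ) • x + (1 / 2 : ℝ) • y) := by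
    rw [smul_add, smul_smul, smul_smul]; norm_num
  have htwo : ((2 : ℝ) : EReal) * ((1 / 2 : ℝ) : EReal) = 1 := by
    rw [← EReal.coe_mul]; norm_num
  calc p (x + y) = (2 : ℝ) * p ((1 / 2 : ℝ) • x + (1 / 2 : ℝ) • y) := by
        rw [hmid, hphom 2 two_pos]
    _ ≤ (2 : ℝ) * (((1 / 2 : ℝ) : EReal) * p x + ((1 / 2 : ℝ) : EReal) * p y) :=
        mul_le_mul_of_nonneg_left (hconvex _ _ _ _ (by norm_num) (by norm_num) (by norm_num))
          (by norm_num)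
    _ = p x + p y := by
        rw [EReal.left_distrib_of_nonneg_of_ne_top (by norm_num) (EReal.coe_ne_top _),
          ← mul_assoc, ← mul_assoc, htwo, one_mul, one_mul]

variable [TopologicalSpace E]

structure IsLSCSublinear (p : E → EReal) : Prop where
  map_zero : p 0 = 0
  convex : ∀ x y : E, ∀ a b : ℝ, 0 ≤ a → 0 ≤ b → a + b = 1 →
    p (a • x + b • y) ≤ (a : EReal) * p x + (b : EReal) * p y
  lowerSemicontinuous : LowerSemicontinuous p
  homogeneous : ∀ t : ℝ, 0 < t → ∀ x, p (t • x) = (t : EReal) * p x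

namespace IsLSCSublinear

variable {p : E → EReal}

def epigraphCone (hp : IsLSCSublinear p) : ProperCone ℝ (E × ℝ) where
  carrier := {q | p q.1 ≤ q.2}
  zero_mem' := by simp [hp.map_zero]
  add_mem' {q r} hq hr :=
    calc p (q.1 + r.1) ≤ p q.1 + p r.1 :=
          map_add_le_add_of_convex_of_homogeneous hp.convex hp.homogeneous _ _
      _ ≤ q.2 + r.2 := add_le_add hq hr
  smul_mem' := by
    rintro ⟨t, ht⟩ q (hq : p q.1 ≤ q.2)
    rcases ht.eq_or_lt with rfl | htpos
    · simp [hp.map_zero]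
    · show p (t • q.1) ≤ ((t * q.2 : ℝ) : EReal)
      rw [hp.homogeneous t htpos, EReal.coe_mul]
      exact mul_le_mul_of_nonneg_left hq (EReal.coe_nonneg.2 ht)
  isClosed' := hp.lowerSemicontinuous.isClosed_epigraph.preimage
    (continuous_fst.prodMk (continuous_coe_real_ereal.comp continuous_snd))

@[simp]
theorem mem_epigraphCone (hp : IsLSCSublinear p) {q : E × ℝ} :
    q ∈ hp.epigraphCone ↔ p q.1 ≤ q.2 :=
  Iff.rfl

end IsLSCSublinear

end Sublinear

section Hilbert

variable {H : Type*} [NormedAddCommGroup H] [InnerProductSpace ℝ H]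

theorem convex_setOf_forall_inner_le (p : H → EReal) :
    Convex ℝ {ζ : H | ∀ x, (⟪ζ, x⟫_ℝ : EReal) ≤ p x} := by
  intro ζ₁ hζ₁ ζ₂ hζ₂ a b ha hb hab x
  have hcomb : ⟪a • ζ₁ + b • ζ₂, x⟫_ℝ ≤ max ⟪ζ₁, x⟫_ℝ ⟪ζ₂, x⟫_ℝ := by
    rw [inner_add_left, real_inner_smul_left, real_inner_smul_left]
    exact Convex.combo_le_max _ _ ha hb hab
  rcases le_max_iff.1 hcomb with h | h
  · exact (EReal.coe_le_coe_iff.2 h).trans (hζ₁ x)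
  · exact (EReal.coe_le_coe_iff.2 h).trans (hζ₂ x)

theorem half_norm_sq_add_inner_sub (A ξ ζ : H) :
    1 / 2 * ‖ξ‖ ^ 2 + ⟪ζ, A - ξ⟫_ℝ =
      1 / 2 * ‖A‖ ^ 2 - 1 / 2 * ‖A - ζ‖ ^ 2 + 1 / 2 * ‖ξ - ζ‖ ^ 2 := by
  rw [norm_sub_sq_real, norm_sub_sq_real, inner_sub_right, real_inner_comm A ζ,
    real_inner_comm ξ ζ]
  ring

theorem le_half_norm_sq_add {p : H → EReal} {ζ : H} (hζ : ∀ x, (⟪ζ, x⟫_ℝ : EReal) ≤ p x)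
    (A ξ : H) :
    ((1 / 2 * ‖A‖ ^ 2 - 1 / 2 * ‖A - ζ‖ ^ 2 + 1 / 2 * ‖ξ - ζ‖ ^ 2 : ℝ) : EReal) ≤
      ((1 / 2 * ‖ξ‖ ^ 2 : ℝ) : EReal) + p (A - ξ) := by
  rw [← half_norm_sq_add_inner_sub, EReal.coe_add]
  gcongr
  exact hζ _

variable [CompleteSpace H] {p : H → EReal}

namespace IsLSCSublinear

theorem exists_forall_inner_le_and_lt_inner (hp : IsLSCSublinear p) (hpnn : ∀ x, 0 ≤ p x)
    {v : H} {c : ℝ} (hc : (c : EReal) < p v) :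
    ∃ ζ : H, (∀ x, (⟪ζ, x⟫_ℝ : EReal) ≤ p x) ∧ c < ⟪ζ, v⟫_ℝ := by
  obtain ⟨f, hf_nonneg, hf_neg⟩ :=
    hp.epigraphCone.hyperplane_separation_point (x₀ := (v, c)) hc.not_ge
  have hf_apply (x : H) (r : ℝ) : f (x, r) = f (x, 0) + r * f (0, 1) := by
    rw [← smul_eq_mul, ← map_smul, ← map_add, Prod.smul_mk, Prod.mk_add_mk]; simp
  -- Tilting `f` by `ε • snd` keeps it nonnegative on the epigraph, since `p ≥ 0` there, and
  -- makes its `ℝ`-component strictly positive.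
  obtain ⟨ε, hε, hcε⟩ := exists_pos_mul_lt (neg_pos.2 hf_neg) c
  set s := f (0, 1) + ε with hs_def
  have hs : 0 < s :=
    add_pos_of_nonneg_of_pos (hf_nonneg (0, 1) (by simp [hp.map_zero])) hε
  set ζ := -s⁻¹ • (InnerProductSpace.toDual ℝ H).symm (f.comp (.inl ℝ H ℝ))
  have hinner (x : H) : ⟪ζ, x⟫_ℝ = -s⁻¹ * f (x, 0) := by
    rw [real_inner_smul_left, InnerProductSpace.toDual_symm_apply]
    rfl
  refine ⟨ζ, fun x => ?_, ?_⟩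
  · refine EReal.le_of_forall_lt_iff_le.1 fun r hr => EReal.coe_le_coe_iff.2 ?_
    have hr0 : 0 ≤ r := EReal.coe_nonneg.1 ((hpnn x).trans hr.le)
    have hxr := hf_nonneg (x, r) (by simpa using hr.le)
    rw [hf_apply] at hxr
    rw [hinner, neg_mul, neg_le, le_inv_mul_iff₀ hs, hs_def]
    nlinarith [mul_nonneg hr0 hε.le]
  · have hvc := hf_apply v c
    rw [hinner, neg_mul, lt_neg, inv_mul_lt_iff₀ hs, hs_def]
    linarith

theorem apply_eq_inner_of_forall_inner_le (hp : IsLSCSublinear p) (hpnn : ∀ x, 0 ≤ p x)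
    {ξ v : H} (hξ : ∀ x, (⟪ξ, x⟫_ℝ : EReal) ≤ p x)
    (hmax : ∀ ζ, (∀ x, (⟪ζ, x⟫_ℝ : EReal) ≤ p x) → ⟪ζ, v⟫_ℝ ≤ ⟪ξ, v⟫_ℝ) :
    p v = ⟪ξ, v⟫_ℝ := by
  refine le_antisymm (not_lt.1 fun hlt => ?_) (hξ v)
  obtain ⟨ζ, hζ, hζv⟩ := hp.exists_forall_inner_le_and_lt_inner hpnn hlt
  exact (hmax ζ hζ).not_gt hζv

end IsLSCSublinear

end Hilbert

/-- For `p : H → [0,+∞]` convex, lsc, positively 1-homogeneous with `p 0 = 0`,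
`N_p = {ζ : ∀ x, ⟨ζ,x⟩ ≤ p x}`, and `A ∈ H`, the functional `ξ ↦ (1/2)‖ξ‖² + p(A - ξ)`
has a unique minimizer, namely the metric projection `ξ₀` of `A` onto `N_p`, and the
minimum value is `(1/2)‖A‖² - (1/2)‖A - ξ₀‖²`. -/
theorem stmt5 {H : Type*} [NormedAddCommGroup H] [InnerProductSpace ℝ H] [CompleteSpace H]
    (p : H → EReal)
    (hp0 : p 0 = 0)
    (hpnn : ∀ x, 0 ≤ p x)
    (hconvex : ∀ x y : H, ∀ a b : ℝ, 0 ≤ a → 0 ≤ b → a + b = 1 →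
      p (a • x + b • y) ≤ (a : EReal) * p x + (b : EReal) * p y)
    (hlsc : LowerSemicontinuous p)
    (hphom : ∀ t : ℝ, 0 < t → ∀ x, p (t • x) = (t : EReal) * p x)
    (N : Set H)
    (hN : N = {ζ : H | ∀ x : H, (⟪ζ, x⟫_ℝ : EReal) ≤ p x})
    (A ξ₀ : H)
    (hξ₀mem : ξ₀ ∈ N)
    (hξ₀dist : ‖A - ξ₀‖ = Metric.infDist A N)
    (E : H → EReal)
    (hE : ∀ ξ, E ξ = ((1/2 * ‖ξ‖^2 : ℝ) : EReal) + p (A - ξ)) :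
    (∀ ξ, E ξ₀ ≤ E ξ) ∧
    (∀ ξ, (∀ η, E ξ ≤ E η) → ξ = ξ₀) ∧
    E ξ₀ = ((1/2 * ‖A‖^2 - 1/2 * ‖A - ξ₀‖^2 : ℝ) : EReal) := by
  have hp : IsLSCSublinear p := ⟨hp0, hconvex, hlsc, hphom⟩
  have hξ₀ : ∀ x, (⟪ξ₀, x⟫_ℝ : EReal) ≤ p x := by rwa [hN] at hξ₀mem
  have hproj : ∀ ζ ∈ N, ⟪A - ξ₀, ζ - ξ₀⟫_ℝ ≤ 0 := by
    refine (norm_eq_iInf_iff_real_inner_le_zero (hN ▸ convex_setOf_forall_inner_le p)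
      hξ₀mem).1 ?_
    simp_rw [hξ₀dist, Metric.infDist_eq_iInf, dist_eq_norm]
  have hpA : p (A - ξ₀) = ⟪ξ₀, A - ξ₀⟫_ℝ := by
    refine hp.apply_eq_inner_of_forall_inner_le hpnn hξ₀ fun ζ hζ => ?_
    have := hproj ζ (hN ▸ hζ)
    rw [inner_sub_right, real_inner_comm ζ, real_inner_comm ξ₀] at this
    linarith
  have hEξ₀ : E ξ₀ = ((1/2 * ‖A‖^2 - 1/2 * ‖A - ξ₀‖^2 : ℝ) : EReal) := by
    rw [hE, hpA, ← EReal.coe_add, half_norm_sq_add_inner_sub, sub_self, norm_zero]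
    norm_num
  have hlower (ξ : H) :
      ((1/2 * ‖A‖^2 - 1/2 * ‖A - ξ₀‖^2 + 1/2 * ‖ξ - ξ₀‖^2 : ℝ) : EReal) ≤ E ξ :=
    hE ξ ▸ le_half_norm_sq_add hξ₀ A ξ
  refine ⟨fun ξ => hEξ₀ ▸ (EReal.coe_le_coe_iff.2 ?_).trans (hlower ξ), fun ξ hξ => ?_, hEξ₀⟩
  · nlinarith [sq_nonneg ‖ξ - ξ₀‖]
  have h := (hlower ξ).trans (hξ ξ₀)
  rw [hEξ₀, EReal.coe_le_coe_iff] at h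
  have : ‖ξ - ξ₀‖ = 0 := by nlinarith [norm_nonneg (ξ - ξ₀)]
  exact sub_eq_zero.1 (norm_eq_zero.1 this)
end

section
/- Let H be a real Hilbert space, let p : H → [0, +∞] be convex, lower semicontinuous, positively 1-homogeneous, with p(0) = 0, and let N_p := {ζ ∈ H : ⟨ζ, x⟩ ≤ p(x) for all x ∈ H}. Fix A ∈ H and let ξ₀ be the metric projection of A onto N_p. Then the functional saturates its defining constraint along the residual: ⟨ξ₀, A − ξ₀⟩ = p(A − ξ₀); in particular p(A − ξ₀) < +∞. -/
/-!
A lower semicontinuous sublinear `p` is the support function of `N_p`: if `p x > c`, separating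
`(x, c)` from the closed convex cone `{(y, t) | p y ≤ t} ⊆ H × ℝ` yields, after a slight tilt, some
`ζ ∈ N_p` with `⟪ζ, x⟫ > c`. The variational characterisation of the projection says that
`ζ ↦ ⟪ζ, A - ξ₀⟫` is maximised over `N_p` at `ξ₀`. Hence
`p (A - ξ₀) = sup_{ζ ∈ N_p} ⟪ζ, A - ξ₀⟫ = ⟪ξ₀, A - ξ₀⟫`.
-/

open scoped InnerProductSpace

lemma EReal.coe_le_of_forall_le_coe {a : ℝ} {e : EReal} (h : ∀ t : ℝ, e ≤ t → a ≤ t) :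
    (a : EReal) ≤ e := by
  induction e using EReal.rec with
  | bot => linarith [h (a - 1) bot_le]
  | coe s => exact EReal.coe_le_coe_iff.mpr (h s le_rfl)
  | top => exact le_top

lemma map_nonpos_of_forall_lt_of_smul_mem {M F : Type*} [AddCommGroup M] [Module ℝ M]
    [FunLike F M ℝ] [LinearMapClass F ℝ M ℝ] (f : F) {S : Set M}
    (hS : ∀ q ∈ S, ∀ t : ℝ, 0 < t → t • q ∈ S) {α : ℝ} (hf : ∀ q ∈ S, f q < α) {q : M}
    (hq : q ∈ S) : f q ≤ 0 := by
  by_contra! hpos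
  have hα : 0 < α := hpos.trans (hf q hq)
  have := hf _ (hS q hq (α / f q) (div_pos hα hpos))
  rw [map_smul, smul_eq_mul, div_mul_cancel₀ _ hpos.ne'] at this
  exact lt_irrefl _ this

section Epigraph

variable {E : Type*} {p : E → EReal}

def realEpigraph (p : E → EReal) : Set (E × ℝ) := {q | p q.1 ≤ q.2}

lemma isClosed_realEpigraph [TopologicalSpace E] (hlsc : LowerSemicontinuous p) :
    IsClosed (realEpigraph p) :=
  hlsc.isClosed_epigraph.preimage
    (continuous_fst.prodMk (continuous_coe_real_ereal.comp continuous_snd))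

lemma convex_realEpigraph [AddCommMonoid E] [Module ℝ E]
    (hconvex : ∀ x y : E, ∀ a b : ℝ, 0 ≤ a → 0 ≤ b → a + b = 1 →
      p (a • x + b • y) ≤ (a : EReal) * p x + (b : EReal) * p y) :
    Convex ℝ (realEpigraph p) := by
  rintro ⟨x, t⟩ (hx : p x ≤ t) ⟨y, s⟩ (hy : p y ≤ s) a b ha hb hab
  calc p (a • x + b • y) ≤ (a : EReal) * p x + (b : EReal) * p y := hconvex x y a b ha hb hab
    _ ≤ (a : EReal) * t + (b : EReal) * s := by gcongr
    _ = ((a • (x, t) + b • (y, s)).2 : ℝ) := by simp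

lemma smul_mem_realEpigraph [SMul ℝ E]
    (hphom : ∀ t : ℝ, 0 < t → ∀ x, p (t • x) = (t : EReal) * p x)
    {q : E × ℝ} (hq : q ∈ realEpigraph p) {t : ℝ} (ht : 0 < t) : t • q ∈ realEpigraph p := by
  change p (t • q.1) ≤ ((t * q.2 : ℝ) : EReal)
  rw [hphom t ht, EReal.coe_mul]
  exact mul_le_mul_of_nonneg_left hq (by exact_mod_cast ht.le)

end Epigraph

section LinearMinorants

variable {H : Type*} [NormedAddCommGroup H] [InnerProductSpace ℝ H] {p : H → EReal}

def linearMinorants (p : H → EReal) : Set H := {ζ | ∀ x, (⟪ζ, x⟫_ℝ : EReal) ≤ p x}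

lemma convex_linearMinorants : Convex ℝ (linearMinorants p) := by
  simp only [linearMinorants, Set.ofPred_forall]
  refine convex_iInter fun x ↦ ?_
  induction p x using EReal.rec with
  | bot => simpa using convex_empty
  | coe r =>
    have hlin : IsLinearMap ℝ (⟪·, x⟫_ℝ) :=
      ⟨(inner_add_left · · x), fun c ζ ↦ real_inner_smul_left ζ x c⟩
    simpa only [EReal.coe_le_coe_iff] using convex_halfSpace_le hlin r
  | top => simpa using convex_univ

lemma zero_mem_linearMinorants (hpnn : ∀ x, 0 ≤ p x) : 0 ∈ linearMinorants p := by
  simpa [linearMinorants] using hpnn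

lemma mem_linearMinorants_of_forall_le {ζ : H} (h : ∀ x (t : ℝ), p x ≤ t → ⟪ζ, x⟫_ℝ ≤ t) :
    ζ ∈ linearMinorants p :=
  fun x ↦ EReal.coe_le_of_forall_le_coe (h x)

end LinearMinorants

lemma inner_le_inner_of_norm_sub_eq_infDist {F : Type*} [NormedAddCommGroup F]
    [InnerProductSpace ℝ F] {K : Set F} (hK : Convex ℝ K) {A ξ w : F} (hξ : ξ ∈ K)
    (hdist : ‖A - ξ‖ = Metric.infDist A K) (hw : w ∈ K) : ⟪w, A - ξ⟫_ℝ ≤ ⟪ξ, A - ξ⟫_ℝ := by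
  have hmin : ‖A - ξ‖ = ⨅ w : K, ‖A - w‖ := by
    simp_rw [hdist, Metric.infDist_eq_iInf, dist_eq_norm]
  have := (norm_eq_iInf_iff_real_inner_le_zero hK hξ).mp hmin w hw
  rw [inner_sub_right, real_inner_comm w, real_inner_comm ξ] at this
  linarith

section Support

variable {H : Type*} [NormedAddCommGroup H] [InnerProductSpace ℝ H] [CompleteSpace H]
  {p : H → EReal}

lemma exists_inner_add_mul_nonpos_of_not_le (hp0 : p 0 = 0)
    (hconvex : ∀ x y : H, ∀ a b : ℝ, 0 ≤ a → 0 ≤ b → a + b = 1 →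
      p (a • x + b • y) ≤ (a : EReal) * p x + (b : EReal) * p y)
    (hlsc : LowerSemicontinuous p)
    (hphom : ∀ t : ℝ, 0 < t → ∀ x, p (t • x) = (t : EReal) * p x) {x : H} {c : ℝ}
    (hxc : ¬ p x ≤ c) :
    ∃ (ζ : H) (s : ℝ), (∀ y (t : ℝ), p y ≤ t → ⟪ζ, y⟫_ℝ + t * s ≤ 0) ∧ 0 < ⟪ζ, x⟫_ℝ + c * s := by
  obtain ⟨f, α, hfE, hfx⟩ := geometric_hahn_banach_closed_point (convex_realEpigraph hconvex)
    (isClosed_realEpigraph hlsc) (show (x, c) ∉ realEpigraph p from hxc)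
  set ζ := (InnerProductSpace.toDual ℝ H).symm (f.comp (.inl ℝ H ℝ))
  have hf : ∀ y t, ⟪ζ, y⟫_ℝ + t * f (0, 1) = f (y, t) := by
    intro y t
    rw [InnerProductSpace.toDual_symm_apply, show (y, t) = (y, 0) + t • ((0 : H), (1 : ℝ)) by simp,
      map_add, map_smul, smul_eq_mul]
    rfl
  have h0 : (0 : H × ℝ) ∈ realEpigraph p := by simp [realEpigraph, hp0]
  refine ⟨ζ, f (0, 1), fun y t hyt ↦ ?_, ?_⟩
  · rw [hf]
    exact map_nonpos_of_forall_lt_of_smul_mem f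
      (fun q hq t ht ↦ smul_mem_realEpigraph hphom hq ht) hfE hyt
  · linarith [hf x c, hfE 0 h0, map_zero f]

lemma le_coe_of_forall_mem_linearMinorants (hp0 : p 0 = 0) (hpnn : ∀ x, 0 ≤ p x)
    (hconvex : ∀ x y : H, ∀ a b : ℝ, 0 ≤ a → 0 ≤ b → a + b = 1 →
      p (a • x + b • y) ≤ (a : EReal) * p x + (b : EReal) * p y)
    (hlsc : LowerSemicontinuous p)
    (hphom : ∀ t : ℝ, 0 < t → ∀ x, p (t • x) = (t : EReal) * p x) {x : H} {c : ℝ}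
    (h : ∀ ζ ∈ linearMinorants p, ⟪ζ, x⟫_ℝ ≤ c) : p x ≤ c := by
  by_contra hxc
  obtain ⟨ζ, s, hζ, hζx⟩ := exists_inner_add_mul_nonpos_of_not_le hp0 hconvex hlsc hphom hxc
  have hs : s ≤ 0 := by simpa using hζ 0 1 (by simp [hp0])
  have hc : 0 ≤ c := by simpa using h 0 (zero_mem_linearMinorants hpnn)
  set m := ⟪ζ, x⟫_ℝ + c * s
  set δ := m / (c + 1)
  have hδ : 0 < δ := by positivity
  -- `s = 0` would be a vertical hyperplane; as `t ≥ 0` on the epigraph, `s - δ < 0` still bounds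
  -- it, and the tilted hyperplane is the graph of a linear minorant of `p`.
  have hmem : (δ - s)⁻¹ • ζ ∈ linearMinorants p := by
    refine mem_linearMinorants_of_forall_le fun y t hyt ↦ ?_
    have ht : 0 ≤ t := by exact_mod_cast (hpnn y).trans hyt
    rw [real_inner_smul_left, inv_mul_le_iff₀ (by linarith)]
    nlinarith [hζ y t hyt]
  have hx := h _ hmem
  rw [real_inner_smul_left, inv_mul_le_iff₀ (by linarith)] at hx
  have hδc : δ * c < m := by
    rw [div_mul_eq_mul_div, div_lt_iff₀ (by linarith)]
    nlinarith
  linarith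

end Support

/-- For `p : H → [0,+∞]` convex, lsc, positively 1-homogeneous with `p 0 = 0`,
`N_p = {ζ : ∀ x, ⟨ζ,x⟩ ≤ p x}`, `A ∈ H` and `ξ₀` the metric projection of `A` onto `N_p`,
the constraint saturates along the residual: `⟨ξ₀, A - ξ₀⟩ = p (A - ξ₀)`; in particular
`p (A - ξ₀) < +∞`. -/
theorem stmt6 {H : Type*} [NormedAddCommGroup H] [InnerProductSpace ℝ H] [CompleteSpace H]
    (p : H → EReal)
    (hp0 : p 0 = 0)
    (hpnn : ∀ x, 0 ≤ p x)
    (hconvex : ∀ x y : H, ∀ a b : ℝ, 0 ≤ a → 0 ≤ b → a + b = 1 →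
      p (a • x + b • y) ≤ (a : EReal) * p x + (b : EReal) * p y)
    (hlsc : LowerSemicontinuous p)
    (hphom : ∀ t : ℝ, 0 < t → ∀ x, p (t • x) = (t : EReal) * p x)
    (N : Set H)
    (hN : N = {ζ : H | ∀ x : H, (⟪ζ, x⟫_ℝ : EReal) ≤ p x})
    (A ξ₀ : H)
    (hξ₀mem : ξ₀ ∈ N)
    (hξ₀dist : ‖A - ξ₀‖ = Metric.infDist A N) :
    p (A - ξ₀) = (⟪ξ₀, A - ξ₀⟫_ℝ : EReal) ∧ p (A - ξ₀) < ⊤ := by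
  change N = linearMinorants p at hN
  subst hN
  have hle : p (A - ξ₀) ≤ ⟪ξ₀, A - ξ₀⟫_ℝ :=
    le_coe_of_forall_mem_linearMinorants hp0 hpnn hconvex hlsc hphom fun _ hζ ↦
      inner_le_inner_of_norm_sub_eq_infDist convex_linearMinorants hξ₀mem hξ₀dist hζ
  have heq : p (A - ξ₀) = ⟪ξ₀, A - ξ₀⟫_ℝ := le_antisymm hle (hξ₀mem (A - ξ₀))
  exact ⟨heq, heq ▸ EReal.coe_lt_top _⟩
end

section
/- Let V be a real normed vector space, let f, g : V → ℝ be convex functions with f(x) ≤ g(x) for all x ∈ V, and let x₀ ∈ V be a point with f(x₀) = g(x₀). Assume there is a constant C ≥ 0 such that g(x) ≤ f(x) + C‖x − x₀‖² for all x ∈ V. Then x₀ minimizes f over V if and only if x₀ minimizes g over V. -/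
/-! If `x₀` minimizes `g`, then `f(x₀) ≤ f(y) + C‖y - x₀‖²` for every `y`, i.e. `x₀` minimizes the
convex function `f` up to a quadratic error. Along the segment from `x₀` to `x`, convexity turns this
into `t (f(x₀) - f(x)) ≤ C t² ‖x - x₀‖²`; dividing by `t` and letting `t → 0⁺` gives `f(x₀) ≤ f(x)`.
The converse direction is immediate from `f ≤ g` and `f(x₀) = g(x₀)`. -/

open Filter Topology Set

lemma nonpos_of_forall_le_mul_of_mem_Ioc {a b : ℝ} (h : ∀ t ∈ Ioc (0 : ℝ) 1, a ≤ b * t) :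
    a ≤ 0 := by
  have hlim : Tendsto (fun t : ℝ => b * t) (𝓝[>] 0) (𝓝 0) := by
    simpa using ((continuous_const_mul b).tendsto' 0 0 (mul_zero b)).mono_left nhdsWithin_le_nhds
  exact ge_of_tendsto hlim (eventually_of_mem (Ioc_mem_nhdsGT one_pos) h)

theorem ConvexOn.isMinOn_of_le_add_mul_norm_sub_sq {V : Type*} [NormedAddCommGroup V]
    [NormedSpace ℝ V] {s : Set V} {f : V → ℝ} (hf : ConvexOn ℝ s f) {x₀ : V} (hx₀ : x₀ ∈ s)
    {C : ℝ} (hquad : ∀ y ∈ s, f x₀ ≤ f y + C * ‖y - x₀‖ ^ 2) : IsMinOn f s x₀ := by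
  intro x hx
  suffices f x₀ - f x ≤ 0 from sub_nonpos.mp this
  refine nonpos_of_forall_le_mul_of_mem_Ioc (b := C * ‖x - x₀‖ ^ 2) fun t ⟨ht0, ht1⟩ => ?_
  have hconv : f ((1 - t) • x₀ + t • x) ≤ (1 - t) * f x₀ + t * f x :=
    hf.2 hx₀ hx (by linarith) ht0.le (by ring)
  have hdist : ‖((1 - t) • x₀ + t • x) - x₀‖ ^ 2 = t ^ 2 * ‖x - x₀‖ ^ 2 := by
    rw [show (1 - t) • x₀ + t • x - x₀ = t • (x - x₀) by module, norm_smul,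
      Real.norm_of_nonneg ht0.le, mul_pow]
  have hmem : (1 - t) • x₀ + t • x ∈ s := hf.1 hx₀ hx (by linarith) ht0.le (by ring)
  have hsegment := hquad _ hmem
  rw [hdist] at hsegment
  have hscaled : t * (f x₀ - f x) ≤ t * (C * ‖x - x₀‖ ^ 2 * t) := by linarith
  exact le_of_mul_le_mul_left hscaled ht0

theorem stmt9_general {V : Type*} [NormedAddCommGroup V] [NormedSpace ℝ V]
    (f g : V → ℝ)
    (hf : ConvexOn ℝ Set.univ f)
    (hle : ∀ x, f x ≤ g x)
    (x₀ : V) (heq : f x₀ = g x₀)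
    (C : ℝ)
    (hquad : ∀ x, g x ≤ f x + C * ‖x - x₀‖^2) :
    (∀ x, f x₀ ≤ f x) ↔ (∀ x, g x₀ ≤ g x) := by
  constructor
  · intro hmin x
    calc g x₀ = f x₀ := heq.symm
      _ ≤ f x := hmin x
      _ ≤ g x := hle x
  · intro hmin
    rw [← isMinOn_univ_iff]
    refine hf.isMinOn_of_le_add_mul_norm_sub_sq (mem_univ x₀) (C := C) fun y _ => ?_
    calc f x₀ = g x₀ := heq
      _ ≤ g y := hmin y
      _ ≤ f y + C * ‖y - x₀‖ ^ 2 := hquad y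

/-- If `f ≤ g` are convex functions on a normed space agreeing at `x₀`, and
`g ≤ f + C‖· - x₀‖²` for some `C ≥ 0`, then `x₀` minimizes `f` iff it minimizes `g`. -/
theorem stmt9 {V : Type*} [NormedAddCommGroup V] [NormedSpace ℝ V]
    (f g : V → ℝ)
    (hf : ConvexOn ℝ Set.univ f)
    (hg : ConvexOn ℝ Set.univ g)
    (hle : ∀ x, f x ≤ g x)
    (x₀ : V) (heq : f x₀ = g x₀)
    (C : ℝ) (hC : 0 ≤ C)
    (hquad : ∀ x, g x ≤ f x + C * ‖x - x₀‖^2) :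
    (∀ x, f x₀ ≤ f x) ↔ (∀ x, g x₀ ≤ g x) :=
  stmt9_general f g hf hle x₀ heq C hquad
end

section
/- Let a : ℝ³ → ℝ be continuous with a(x) ≥ 0 for all x and a(x) → +∞ as |x| → +∞ (i.e. a tends to +∞ along the cocompact filter). Then for every m > 0 there exists a unique λ ∈ ℝ such that ∫_{ℝ³} max(λ − a(x), 0) dx = m. (For every λ ∈ ℝ the function x ↦ max(λ − a(x), 0) is integrable with respect to Lebesgue measure, since it is bounded and supported in the compact set {a ≤ λ}.) -/
/-!
The mass `F(λ) = ∫ (λ - a)⁺` is finite because coercivity makes the sublevel sets `{a ≤ λ}`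
compact, and continuous in `λ` by dominated convergence. It vanishes at `λ = min a`, grows at
least linearly because `(λ - a)⁺ ≥ λ - a x₀ - 1` on the open set `{a < a x₀ + 1}` of positive
measure, and increases strictly once it is positive, since raising `λ` raises the integrand on
the (non-null) support of `(λ - a)⁺`. Existence is then the intermediate value theorem on
`[min a, ∞)`, and uniqueness is strict monotonicity on `{F > 0}`.
-/

open MeasureTheory Filter Set

namespace ThomasFermi

variable {X : Type*} {a : X → ℝ}

lemma isCompact_setOf_le_of_tendsto_cocompact [TopologicalSpace X] (ha : Continuous a)
    (hcoercive : Tendsto a (cocompact X) atTop) (c : ℝ) : IsCompact {x | a x ≤ c} := by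
  obtain ⟨K, hK, hsub⟩ := mem_cocompact'.1 (hcoercive.eventually (eventually_gt_atTop c))
  exact hK.of_isClosed_subset (isClosed_le ha continuous_const)
    fun x (hx : a x ≤ c) => hsub hx.not_gt

variable [MeasurableSpace X] {μ : Measure X}

noncomputable def mass (μ : Measure X) (a : X → ℝ) (lam : ℝ) : ℝ := ∫ x, max (lam - a x) 0 ∂μ

lemma mass_eq_zero_of_le {lam : ℝ} (h : ∀ x, lam ≤ a x) : mass μ a lam = 0 :=
  integral_eq_zero_of_ae (ae_of_all _ fun x => max_eq_right (sub_nonpos.2 (h x)))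

variable [TopologicalSpace X] [OpensMeasurableSpace X]

lemma integrable_max_sub_zero [IsFiniteMeasureOnCompacts μ] (ha : Continuous a)
    (hcoercive : Tendsto a (cocompact X) atTop) (lam : ℝ) :
    Integrable (fun x => max (lam - a x) 0) μ := by
  refine ((continuous_const.sub ha).max continuous_const).integrable_of_hasCompactSupport ?_
  refine HasCompactSupport.intro' (isCompact_setOf_le_of_tendsto_cocompact ha hcoercive lam)
    (isClosed_le ha continuous_const) fun x hx => max_eq_right ?_
  exact sub_nonpos.2 (not_le.1 hx).le

lemma continuous_mass [IsFiniteMeasureOnCompacts μ] (ha : Continuous a)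
    (hcoercive : Tendsto a (cocompact X) atTop) : Continuous (mass μ a) := by
  refine continuous_iff_continuousAt.2 fun lam₀ => ?_
  refine continuousAt_of_dominated (bound := fun x => max (lam₀ + 1 - a x) 0)
    (Eventually.of_forall fun lam =>
      (integrable_max_sub_zero ha hcoercive lam).aestronglyMeasurable)
    ?_ (integrable_max_sub_zero ha hcoercive (lam₀ + 1))
    (ae_of_all _ fun x => by fun_prop)
  filter_upwards [eventually_lt_nhds (lt_add_one lam₀)] with lam hlam
  refine ae_of_all _ fun x => ?_
  rw [Real.norm_of_nonneg (le_max_right _ _)]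
  exact max_le_max (by linarith) le_rfl

lemma tendsto_mass_atTop [Nonempty X] [μ.IsOpenPosMeasure] [IsFiniteMeasureOnCompacts μ]
    (ha : Continuous a) (hcoercive : Tendsto a (cocompact X) atTop) :
    Tendsto (mass μ a) atTop atTop := by
  obtain ⟨x₀⟩ := ‹Nonempty X›
  set c := a x₀ + 1
  set U := {x | a x < c}
  have hU_open : IsOpen U := isOpen_lt ha continuous_const
  have hU_sub : U ⊆ {x | a x ≤ c} := fun x (hx : a x < c) => hx.le
  have hU_finite : μ U ≠ ⊤ := ((measure_mono hU_sub).trans_lt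
    (isCompact_setOf_le_of_tendsto_cocompact ha hcoercive c).measure_lt_top).ne
  have hU_pos : 0 < μ.real U :=
    ENNReal.toReal_pos (hU_open.measure_ne_zero μ ⟨x₀, show a x₀ < c from lt_add_one _⟩) hU_finite
  have hlinear : Tendsto (fun lam => (lam - c) * μ.real U) atTop atTop :=
    (tendsto_atTop_add_const_right _ (-c) tendsto_id).atTop_mul_const hU_pos
  refine tendsto_atTop_mono (fun lam => ?_) hlinear
  calc (lam - c) * μ.real U ≤ ∫ x in U, max (lam - a x) 0 ∂μ :=
        setIntegral_ge_of_const_le_real hU_open.measurableSet hU_finite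
          (fun x hx => (sub_le_sub_left (le_of_lt hx) lam).trans (le_max_left _ _))
          (integrable_max_sub_zero ha hcoercive lam).integrableOn
    _ ≤ mass μ a lam :=
        setIntegral_le_integral (integrable_max_sub_zero ha hcoercive lam)
          (ae_of_all _ fun x => le_max_right _ _)

lemma mass_lt_mass_of_pos [IsFiniteMeasureOnCompacts μ] (ha : Continuous a)
    (hcoercive : Tendsto a (cocompact X) atTop) {lam lam' : ℝ} (hlt : lam < lam')
    (hpos : 0 < mass μ a lam) : mass μ a lam < mass μ a lam' := by
  set f := fun x => max (lam - a x) 0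
  set f' := fun x => max (lam' - a x) 0
  have hf := integrable_max_sub_zero (μ := μ) ha hcoercive lam
  have hf' := integrable_max_sub_zero (μ := μ) ha hcoercive lam'
  have hle : f ≤ f' := fun x => max_le_max (by linarith) le_rfl
  have hsupport : Function.support f ⊆ Function.support (f' - f) := by
    intro x hx
    have hax : a x < lam := not_le.1 fun h => hx (max_eq_right (sub_nonpos.2 h))
    simp only [Function.mem_support, Pi.sub_apply, f, f',
      max_eq_left (sub_pos.2 hax).le, max_eq_left (sub_pos.2 (hax.trans hlt)).le]
    linarith
  have hdiff : 0 < ∫ x, (f' - f) x ∂μ := by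
    refine (integral_pos_iff_support_of_nonneg (sub_nonneg.2 hle) (hf'.sub hf)).2 ?_
    exact ((integral_pos_iff_support_of_nonneg (fun x => le_max_right _ _) hf).1 hpos).trans_le
      (measure_mono hsupport)
  rw [Pi.sub_def, integral_sub hf' hf] at hdiff
  exact sub_pos.1 hdiff

lemma strictMonoOn_mass [IsFiniteMeasureOnCompacts μ] (ha : Continuous a)
    (hcoercive : Tendsto a (cocompact X) atTop) :
    StrictMonoOn (mass μ a) {lam | 0 < mass μ a lam} :=
  fun _ hpos _ _ hlt => mass_lt_mass_of_pos ha hcoercive hlt hpos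

theorem existsUnique_mass_eq [Nonempty X] [μ.IsOpenPosMeasure] [IsFiniteMeasureOnCompacts μ]
    (ha : Continuous a) (hcoercive : Tendsto a (cocompact X) atTop) {m : ℝ} (hm : 0 < m) :
    ∃! lam, mass μ a lam = m := by
  obtain ⟨x₀, hx₀⟩ := ha.exists_forall_le hcoercive
  have hm_mem : m ∈ Ici (mass μ a (a x₀)) := by
    rw [mass_eq_zero_of_le hx₀]
    exact hm.le
  obtain ⟨lam, -, hlam⟩ := intermediate_value_Ici (continuous_mass ha hcoercive).continuousOn
    (tendsto_mass_atTop ha hcoercive) hm_mem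
  refine ⟨lam, hlam, fun lam' hlam' => ?_⟩
  exact (strictMonoOn_mass ha hcoercive).injOn (show 0 < mass μ a lam' by rwa [hlam'])
    (show 0 < mass μ a lam by rwa [hlam]) (hlam'.trans hlam.symm)

end ThomasFermi

theorem stmt10_general
    (a : EuclideanSpace ℝ (Fin 3) → ℝ)
    (hcont : Continuous a)
    (hcoercive : Tendsto a (cocompact (EuclideanSpace ℝ (Fin 3))) atTop) :
    ∀ m : ℝ, 0 < m → ∃! lam : ℝ, (∫ x : EuclideanSpace ℝ (Fin 3), max (lam - a x) 0) = m :=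
  fun _ hm => ThomasFermi.existsUnique_mass_eq hcont hcoercive hm

/-- If `a : ℝ³ → ℝ` is continuous, nonnegative and tends to `+∞` at infinity,
then for every `m > 0` there is a unique `λ ∈ ℝ` with `∫ max (λ - a x) 0 dx = m`. -/
theorem stmt10
    (a : EuclideanSpace ℝ (Fin 3) → ℝ)
    (hcont : Continuous a)
    (hnonneg : ∀ x, 0 ≤ a x)
    (hcoercive : Tendsto a (cocompact (EuclideanSpace ℝ (Fin 3))) atTop) :
    ∀ m : ℝ, 0 < m → ∃! lam : ℝ, (∫ x : EuclideanSpace ℝ (Fin 3), max (lam - a x) 0) = m :=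
  stmt10_general a hcont hcoercive
end

section
/- Let H be a real Hilbert space, let p : H → [0, +∞] be convex, lower semicontinuous, positively 1-homogeneous with p(0) = 0, let N_p := {ζ ∈ H : ⟨ζ, x⟩ ≤ p(x) for all x ∈ H}, and let e ∈ H. Then x₀ ∈ H minimizes the functional F(x) := (1/2)‖x‖² + p(x + e) over H if and only if −x₀ ∈ N_p and ‖e + x₀‖ = dist(e, N_p) (equivalently, −x₀ is the unique minimizer of ζ ↦ ‖ζ − e‖² over N_p); in particular F has a unique minimizer, namely x₀ = −proj_{N_p}(e). -/
/-!
Let `ξ₀` be the nearest point of `e` in `N_p`; then `⟪ζ, e - ξ₀⟫ ≤ ⟪ξ₀, e - ξ₀⟫` for all `ζ ∈ N_p`.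
A closed sublinear `p` is the support function of `N_p` (separate a point from its epigraph, a
closed convex cone in `H × ℝ`), so `p (e - ξ₀) = ⟪ξ₀, e - ξ₀⟫`. Every `ξ ∈ N_p` gives the lower
bound `F x ≥ ½‖x‖² + ⟪ξ, x + e⟫ = ½‖ξ‖² + ⟪ξ, e - ξ⟫ + ½‖x + ξ‖²`, and for `ξ = ξ₀` the first two
terms are exactly `F (-ξ₀)`; the last one forces uniqueness of the minimizer.
-/

open scoped InnerProductSpace

section Sublinear

variable {E : Type*} [AddCommGroup E] [Module ℝ E] {p : E → EReal}

theorem map_add_le_of_convex_of_homogeneous (hpnn : ∀ x, 0 ≤ p x)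
    (hconvex : ∀ x y : E, ∀ a b : ℝ, 0 ≤ a → 0 ≤ b → a + b = 1 →
      p (a • x + b • y) ≤ (a : EReal) * p x + (b : EReal) * p y)
    (hphom : ∀ t : ℝ, 0 < t → ∀ x, p (t • x) = (t : EReal) * p x) (x y : E) :
    p (x + y) ≤ p x + p y := by
  have hmid : x + y = (2 : ℝ) • ((1 / 2 : ℝ) • x + (1 / 2 : ℝ) • y) := by module
  have hhalf : ((2 : ℝ) : EReal) * ((1 / 2 : ℝ) : EReal) = 1 := by
    rw [← EReal.coe_mul]; norm_num
  calc p (x + y) = (2 : ℝ) * p ((1 / 2 : ℝ) • x + (1 / 2 : ℝ) • y) := by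
        rw [hmid, hphom 2 two_pos]
    _ ≤ (2 : ℝ) * (((1 / 2 : ℝ) : EReal) * p x + ((1 / 2 : ℝ) : EReal) * p y) :=
        mul_le_mul_of_nonneg_left (hconvex x y _ _ (by norm_num) (by norm_num) (by norm_num))
          (by norm_num)
    _ = p x + p y := by
        rw [EReal.left_distrib_of_nonneg (mul_nonneg (by norm_num) (hpnn x))
          (mul_nonneg (by norm_num) (hpnn y)), ← mul_assoc, ← mul_assoc, hhalf, one_mul, one_mul]

end Sublinear

theorem exists_strongDual_nonneg_on_epigraph_of_lt {E : Type*} [TopologicalSpace E]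
    [AddCommGroup E] [IsTopologicalAddGroup E] [Module ℝ E] [ContinuousSMul ℝ E]
    [LocallyConvexSpace ℝ E]
    {p : E → EReal} (hp0 : p 0 = 0)
    (hadd : ∀ x y, p (x + y) ≤ p x + p y)
    (hlsc : LowerSemicontinuous p)
    (hphom : ∀ t : ℝ, 0 < t → ∀ x, p (t • x) = (t : EReal) * p x)
    {v : E} {c : ℝ} (hc : (c : EReal) < p v) :
    ∃ f : StrongDual ℝ (E × ℝ),
      (∀ x (t : ℝ), p x ≤ (t : EReal) → 0 ≤ f (x, t)) ∧ f (v, c) < 0 := by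
  let C : ProperCone ℝ (E × ℝ) :=
    { carrier := {q | p q.1 ≤ q.2}
      add_mem' := fun {q r} hq hr ↦ by
        simp only [Set.mem_ofPred_eq, Prod.fst_add, Prod.snd_add, EReal.coe_add] at *
        exact (hadd _ _).trans (add_le_add hq hr)
      zero_mem' := by simp [hp0]
      smul_mem' := fun ⟨t, ht⟩ q hq ↦ by
        change p (t • q.1) ≤ ((t * q.2 : ℝ) : EReal)
        rcases ht.eq_or_lt with rfl | ht
        · simp [hp0]
        · rw [hphom t ht, EReal.coe_mul]
          exact mul_le_mul_of_nonneg_left hq (EReal.coe_nonneg.2 ht.le)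
      isClosed' := hlsc.isClosed_epigraph.preimage
        (continuous_fst.prodMk (continuous_coe_real_ereal.comp continuous_snd)) }
  obtain ⟨f, hfC, hf⟩ := C.hyperplane_separation_point (x₀ := (v, c)) (not_le.2 hc)
  exact ⟨f, fun x t h ↦ hfC (x, t) h, hf⟩

section DualSet

variable {H : Type*} [NormedAddCommGroup H] [InnerProductSpace ℝ H] {p : H → EReal}

theorem real_inner_le_of_norm_eq_infDist {K : Set H} (hK : Convex ℝ K) {e ξ : H} (hξ : ξ ∈ K)
    (hd : ‖e - ξ‖ = Metric.infDist e K) {ζ : H} (hζ : ζ ∈ K) : ⟪ζ, e - ξ⟫_ℝ ≤ ⟪ξ, e - ξ⟫_ℝ := by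
  have hinf : ‖e - ξ‖ = ⨅ w : K, ‖e - w‖ := by
    simpa only [Metric.infDist_eq_iInf, dist_eq_norm] using hd
  have h := (norm_eq_iInf_iff_real_inner_le_zero hK hξ).1 hinf ζ hζ
  rw [real_inner_comm (e - ξ) ζ, real_inner_comm (e - ξ) ξ]
  linarith [inner_sub_right (𝕜 := ℝ) (e - ξ) ζ ξ]

def dualSet (p : H → EReal) : Set H := {ζ | ∀ x, (⟪ζ, x⟫_ℝ : EReal) ≤ p x}

theorem zero_mem_dualSet (hpnn : ∀ x, 0 ≤ p x) : 0 ∈ dualSet p := fun x ↦ by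
  simpa using hpnn x

theorem convex_dualSet : Convex ℝ (dualSet p) := by
  intro ζ₁ h₁ ζ₂ h₂ a b ha hb hab x
  have hcombo : ⟪a • ζ₁ + b • ζ₂, x⟫_ℝ ≤ max ⟪ζ₁, x⟫_ℝ ⟪ζ₂, x⟫_ℝ := by
    rw [inner_add_left, real_inner_smul_left, real_inner_smul_left]
    exact Convex.combo_le_max _ _ ha hb hab
  refine (EReal.coe_le_coe_iff.2 hcombo).trans ?_
  rcases max_choice ⟪ζ₁, x⟫_ℝ ⟪ζ₂, x⟫_ℝ with h | h <;> rw [h]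
  exacts [h₁ x, h₂ x]

theorem le_of_forall_mem_dualSet_inner_le [CompleteSpace H] (hp0 : p 0 = 0) (hpnn : ∀ x, 0 ≤ p x)
    (hconvex : ∀ x y : H, ∀ a b : ℝ, 0 ≤ a → 0 ≤ b → a + b = 1 →
      p (a • x + b • y) ≤ (a : EReal) * p x + (b : EReal) * p y)
    (hlsc : LowerSemicontinuous p)
    (hphom : ∀ t : ℝ, 0 < t → ∀ x, p (t • x) = (t : EReal) * p x)
    {v : H} {c : ℝ} (h : ∀ ζ ∈ dualSet p, ⟪ζ, v⟫_ℝ ≤ c) : p v ≤ c := by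
  by_contra! hlt
  obtain ⟨f, hf_nonneg, hf_neg⟩ := exists_strongDual_nonneg_on_epigraph_of_lt hp0
    (map_add_le_of_convex_of_homogeneous hpnn hconvex hphom) hlsc hphom hlt
  -- `f (x, t) = -⟪g, x⟫ + t * s`. If `s > 0`, then `s⁻¹ • g ∈ dualSet p` violates the bound at `v`;
  -- if `s = 0`, the ray `ℝ≥0 • g` lies in `dualSet p`, on which `⟪·, v⟫` is unbounded.
  set g := (InnerProductSpace.toDual ℝ H).symm (-f.comp (ContinuousLinearMap.inl ℝ H ℝ))
  set s := f (0, 1)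
  have hf : ∀ x (t : ℝ), f (x, t) = -⟪g, x⟫_ℝ + t * s := by
    intro x t
    have hxt : (x, t) = ContinuousLinearMap.inl ℝ H ℝ x + t • ((0 : H), (1 : ℝ)) := by simp
    rw [hxt, map_add, map_smul, smul_eq_mul, InnerProductSpace.toDual_symm_apply]
    simp [s]
  have hs : 0 ≤ s := hf_nonneg 0 1 (by simp [hp0])
  have hc : 0 ≤ c := by simpa using h 0 (zero_mem_dualSet hpnn)
  have hgv : c * s < ⟪g, v⟫_ℝ := by linarith [hf v c]
  have hmem : ∀ t : ℝ, 0 ≤ t → t * s ≤ 1 → t • g ∈ dualSet p := by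
    intro t ht hts x
    rcases eq_or_ne (p x) ⊤ with htop | hfin
    · simp [htop]
    have hreal := EReal.coe_toReal hfin (ne_bot_of_le_ne_bot EReal.zero_ne_bot (hpnn x))
    have hgx : ⟪g, x⟫_ℝ ≤ (p x).toReal * s := by
      linarith [hf x (p x).toReal, hf_nonneg x (p x).toReal hreal.ge]
    have hpx : 0 ≤ (p x).toReal := EReal.toReal_nonneg (hpnn x)
    rw [← hreal, real_inner_smul_left, EReal.coe_le_coe_iff]
    nlinarith [mul_le_mul_of_nonneg_left hgx ht]
  rcases hs.eq_or_lt with hs0 | hspos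
  · rw [← hs0, mul_zero] at hgv
    have := h _ (hmem ((c + 1) / ⟪g, v⟫_ℝ) (by positivity) (by simp [← hs0]))
    rw [real_inner_smul_left, div_mul_cancel₀ _ hgv.ne'] at this
    linarith
  · have := h _ (hmem s⁻¹ (inv_nonneg.2 hs) (inv_mul_cancel₀ hspos.ne').le)
    rw [real_inner_smul_left, inv_mul_le_iff₀ hspos] at this
    linarith

theorem map_sub_eq_inner_of_norm_eq_infDist [CompleteSpace H] (hp0 : p 0 = 0)
    (hpnn : ∀ x, 0 ≤ p x)
    (hconvex : ∀ x y : H, ∀ a b : ℝ, 0 ≤ a → 0 ≤ b → a + b = 1 →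
      p (a • x + b • y) ≤ (a : EReal) * p x + (b : EReal) * p y)
    (hlsc : LowerSemicontinuous p)
    (hphom : ∀ t : ℝ, 0 < t → ∀ x, p (t • x) = (t : EReal) * p x)
    {e ξ : H} (hξ : ξ ∈ dualSet p) (hd : ‖e - ξ‖ = Metric.infDist e (dualSet p)) :
    p (e - ξ) = ⟪ξ, e - ξ⟫_ℝ :=
  le_antisymm (le_of_forall_mem_dualSet_inner_le hp0 hpnn hconvex hlsc hphom
    fun _ hζ ↦ real_inner_le_of_norm_eq_infDist convex_dualSet hξ hd hζ) (hξ _)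

noncomputable def tikhonovFunctional (p : H → EReal) (e x : H) : EReal :=
  ((1 / 2 * ‖x‖ ^ 2 : ℝ) : EReal) + p (x + e)

theorem le_tikhonovFunctional_of_mem_dualSet {ξ : H} (hξ : ξ ∈ dualSet p) (e x : H) :
    ((1 / 2 * ‖ξ‖ ^ 2 + ⟪ξ, e - ξ⟫_ℝ + 1 / 2 * ‖x + ξ‖ ^ 2 : ℝ) : EReal) ≤
      tikhonovFunctional p e x := by
  have hquad : 1 / 2 * ‖ξ‖ ^ 2 + ⟪ξ, e - ξ⟫_ℝ + 1 / 2 * ‖x + ξ‖ ^ 2 =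
      1 / 2 * ‖x‖ ^ 2 + ⟪ξ, x + e⟫_ℝ := by
    rw [norm_add_sq_real, inner_sub_right, inner_add_right, real_inner_self_eq_norm_sq,
      real_inner_comm ξ x]
    ring
  rw [hquad, EReal.coe_add, tikhonovFunctional]
  exact add_le_add_right (hξ _) _

theorem tikhonovFunctional_neg_eq {e ξ : H} (hpξ : p (e - ξ) = ⟪ξ, e - ξ⟫_ℝ) :
    tikhonovFunctional p e (-ξ) = ((1 / 2 * ‖ξ‖ ^ 2 + ⟪ξ, e - ξ⟫_ℝ : ℝ) : EReal) := by
  rw [tikhonovFunctional, norm_neg, neg_add_eq_sub, hpξ, EReal.coe_add]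

theorem tikhonovFunctional_neg_le {e ξ : H} (hξ : ξ ∈ dualSet p)
    (hpξ : p (e - ξ) = ⟪ξ, e - ξ⟫_ℝ) (x : H) :
    tikhonovFunctional p e (-ξ) ≤ tikhonovFunctional p e x := by
  refine le_trans ?_ (le_tikhonovFunctional_of_mem_dualSet hξ e x)
  rw [tikhonovFunctional_neg_eq hpξ, EReal.coe_le_coe_iff]
  have := sq_nonneg ‖x + ξ‖
  linarith

theorem eq_neg_of_tikhonovFunctional_le {e ξ y : H} (hξ : ξ ∈ dualSet p)
    (hpξ : p (e - ξ) = ⟪ξ, e - ξ⟫_ℝ)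
    (hy : tikhonovFunctional p e y ≤ tikhonovFunctional p e (-ξ)) : y = -ξ := by
  have h := (le_tikhonovFunctional_of_mem_dualSet hξ e y).trans hy
  rw [tikhonovFunctional_neg_eq hpξ, EReal.coe_le_coe_iff] at h
  have hsq : ‖y + ξ‖ ^ 2 ≤ 0 := by linarith
  exact eq_neg_of_add_eq_zero_left (norm_eq_zero.1 (pow_eq_zero_iff two_ne_zero |>.1
    (le_antisymm hsq (sq_nonneg _))))

end DualSet

/-- For `p : H → [0,+∞]` convex, lsc, positively 1-homogeneous with `p 0 = 0`,
`N_p = {ζ : ∀ x, ⟨ζ,x⟩ ≤ p x}` and `e ∈ H`: `x₀` minimizes `F x = (1/2)‖x‖² + p (x + e)`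
iff `-x₀ ∈ N_p` and `‖e + x₀‖ = dist(e, N_p)`; in particular `F` has the unique minimizer
`-proj_{N_p} e`. -/
theorem stmt13 {H : Type*} [NormedAddCommGroup H] [InnerProductSpace ℝ H] [CompleteSpace H]
    (p : H → EReal)
    (hp0 : p 0 = 0)
    (hpnn : ∀ x, 0 ≤ p x)
    (hconvex : ∀ x y : H, ∀ a b : ℝ, 0 ≤ a → 0 ≤ b → a + b = 1 →
      p (a • x + b • y) ≤ (a : EReal) * p x + (b : EReal) * p y)
    (hlsc : LowerSemicontinuous p)
    (hphom : ∀ t : ℝ, 0 < t → ∀ x, p (t • x) = (t : EReal) * p x)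
    (N : Set H)
    (hN : N = {ζ : H | ∀ x : H, (⟪ζ, x⟫_ℝ : EReal) ≤ p x})
    (e : H)
    (F : H → EReal)
    (hF : ∀ x, F x = ((1/2 * ‖x‖^2 : ℝ) : EReal) + p (x + e))
    (ξ₀ : H)
    (hξ₀mem : ξ₀ ∈ N)
    (hξ₀dist : ‖e - ξ₀‖ = Metric.infDist e N) :
    (∀ x₀ : H, (∀ x, F x₀ ≤ F x) ↔ (-x₀ ∈ N ∧ ‖e + x₀‖ = Metric.infDist e N)) ∧
    (∀ x, F (-ξ₀) ≤ F x) ∧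
    (∀ y, (∀ x, F y ≤ F x) → y = -ξ₀) := by
  subst hN
  obtain rfl : F = tikhonovFunctional p e := funext hF
  have hopt : ∀ ξ ∈ dualSet p, ‖e - ξ‖ = Metric.infDist e (dualSet p) →
      p (e - ξ) = ⟪ξ, e - ξ⟫_ℝ :=
    fun _ hξ hd ↦ map_sub_eq_inner_of_norm_eq_infDist hp0 hpnn hconvex hlsc hphom hξ hd
  have hpξ₀ := hopt ξ₀ hξ₀mem hξ₀dist
  have huniq : ∀ y, (∀ x, tikhonovFunctional p e y ≤ tikhonovFunctional p e x) → y = -ξ₀ :=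
    fun y hy ↦ eq_neg_of_tikhonovFunctional_le hξ₀mem hpξ₀ (hy _)
  refine ⟨fun x₀ ↦ ⟨fun hx₀ ↦ ?_, fun ⟨hmem, hd⟩ ↦ ?_⟩,
    tikhonovFunctional_neg_le hξ₀mem hpξ₀, huniq⟩
  · obtain rfl := huniq x₀ hx₀
    rw [neg_neg, ← sub_eq_add_neg]
    exact ⟨hξ₀mem, hξ₀dist⟩
  · rw [← sub_neg_eq_add] at hd
    simpa using tikhonovFunctional_neg_le hmem (hopt _ hmem hd)
end
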